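/- arXiv:1807.02421 — 3 statements merged into one kernel-verified Lean document; each statement's English description precedes it below -/
import Mathlib

section
/- Let a ∈ (0,1), b ∈ (1/2,∞), η ∈ (0,1), δ ∈ (0,1), and x ∈ ℝ. Define Pr(κ > η | x) = (∫_η¹ κ^{b-1/2}(1-κ)^{a-1} e^{-κx²/2} dκ) / (∫₀¹ κ^{b-1/2}(1-κ)^{a-1} e^{-κx²/2} dκ). Then Pr(κ > η | x) ≤ ((b + 1/2)(1-η)^a / (a (ηδ)^{b+1/2})) · exp(-η(1-δ)x²/2). -/
/-!
On `[η, 1]` the factor `κ ^ (b - 1/2)` is at most `1` and the Gaussian factor at most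
`exp (-η x² / 2)`, so the numerator is at most `(1 - η) ^ a / a · exp (-η x² / 2)`.
On `[0, ηδ]` the factor `(1 - κ) ^ (a - 1)` is at least `1` (as `a ≤ 1`) and the Gaussian factor
at least `exp (-ηδ x² / 2)`, so the denominator is at least
`(ηδ) ^ (b + 1/2) / (b + 1/2) · exp (-ηδ x² / 2)`. The quotient of the two bounds is the claim.
-/

open Real intervalIntegral MeasureTheory Set

noncomputable def nbpKernel (a b x κ : ℝ) : ℝ :=
  κ ^ (b - 1/2) * (1 - κ) ^ (a - 1) * exp (-κ * x ^ 2 / 2)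

theorem intervalIntegrable_one_sub_rpow {r : ℝ} (hr : -1 < r) (c d : ℝ) :
    IntervalIntegrable (fun κ : ℝ => (1 - κ) ^ r) volume c d := by
  simpa using (intervalIntegrable_rpow' hr (a := 1 - c) (b := 1 - d)).comp_sub_left 1

theorem integral_one_sub_rpow_sub_one {a η : ℝ} (ha : 0 < a) :
    ∫ κ in η..1, (1 - κ) ^ (a - 1) = (1 - η) ^ a / a := by
  rw [integral_comp_sub_left (fun u : ℝ => u ^ (a - 1)), sub_self,
    integral_rpow (Or.inl (by linarith)), sub_add_cancel, zero_rpow ha.ne']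
  ring

theorem integral_rpow_from_zero {s m : ℝ} (hs : -1 < s) :
    ∫ κ in (0 : ℝ)..m, κ ^ s = m ^ (s + 1) / (s + 1) := by
  rw [integral_rpow (Or.inl hs), zero_rpow (by linarith), sub_zero]

namespace nbpKernel

variable {a b x : ℝ}

theorem nonneg {κ : ℝ} (hκ : κ ∈ Icc (0 : ℝ) 1) : 0 ≤ nbpKernel a b x κ :=
  mul_nonneg (mul_nonneg (rpow_nonneg hκ.1 _) (rpow_nonneg (sub_nonneg.2 hκ.2) _))
    (exp_pos _).le

theorem intervalIntegrable (ha : 0 < a) (hb : 1/2 ≤ b) (c d : ℝ) :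
    IntervalIntegrable (nbpKernel a b x) volume c d := by
  have hcont : Continuous fun κ : ℝ => κ ^ (b - 1/2) * exp (-κ * x ^ 2 / 2) :=
    (continuous_rpow_const (by linarith)).mul (by fun_prop)
  refine ((intervalIntegrable_one_sub_rpow (r := a - 1) (by linarith) c d).continuousOn_mul
    hcont.continuousOn).congr_ae (Filter.Eventually.of_forall fun κ => ?_)
  simp only [nbpKernel]
  ring

theorem le_on_tail {η κ : ℝ} (hb : 1/2 ≤ b) (hη : 0 ≤ η) (hκ : κ ∈ Icc η 1) :
    nbpKernel a b x κ ≤ (1 - κ) ^ (a - 1) * exp (-η * x ^ 2 / 2) := by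
  have hpow : κ ^ (b - 1/2) ≤ 1 := rpow_le_one (hη.trans hκ.1) hκ.2 (by linarith)
  have hexp : exp (-κ * x ^ 2 / 2) ≤ exp (-η * x ^ 2 / 2) :=
    exp_le_exp.2 (by nlinarith [sq_nonneg x, hκ.1])
  have hbase : 0 ≤ (1 - κ) ^ (a - 1) := rpow_nonneg (sub_nonneg.2 hκ.2) _
  calc nbpKernel a b x κ ≤ 1 * (1 - κ) ^ (a - 1) * exp (-κ * x ^ 2 / 2) := by
        unfold nbpKernel; gcongr
    _ ≤ (1 - κ) ^ (a - 1) * exp (-η * x ^ 2 / 2) := by rw [one_mul]; gcongr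

theorem ge_on_head {m κ : ℝ} (ha : a ≤ 1) (hm : m < 1) (hκ : κ ∈ Icc 0 m) :
    κ ^ (b - 1/2) * exp (-m * x ^ 2 / 2) ≤ nbpKernel a b x κ := by
  have hpow : 1 ≤ (1 - κ) ^ (a - 1) :=
    one_le_rpow_of_pos_of_le_one_of_nonpos (by linarith [hκ.2]) (by linarith [hκ.1])
      (by linarith)
  have hexp : exp (-m * x ^ 2 / 2) ≤ exp (-κ * x ^ 2 / 2) :=
    exp_le_exp.2 (by nlinarith [sq_nonneg x, hκ.2])
  have hκs : 0 ≤ κ ^ (b - 1/2) := rpow_nonneg hκ.1 _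
  calc κ ^ (b - 1/2) * exp (-m * x ^ 2 / 2)
      ≤ κ ^ (b - 1/2) * (1 * exp (-κ * x ^ 2 / 2)) := by rw [one_mul]; gcongr
    _ ≤ nbpKernel a b x κ := by
        rw [nbpKernel, mul_assoc]; gcongr

theorem integral_tail_le {η : ℝ} (ha : 0 < a) (hb : 1/2 ≤ b) (hη0 : 0 ≤ η) (hη1 : η ≤ 1) :
    ∫ κ in η..1, nbpKernel a b x κ ≤ (1 - η) ^ a / a * exp (-η * x ^ 2 / 2) :=
  calc ∫ κ in η..1, nbpKernel a b x κ
      ≤ ∫ κ in η..1, (1 - κ) ^ (a - 1) * exp (-η * x ^ 2 / 2) :=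
        integral_mono_on hη1 (intervalIntegrable ha hb η 1)
          ((intervalIntegrable_one_sub_rpow (by linarith) η 1).mul_const _)
          fun _ hκ => le_on_tail hb hη0 hκ
    _ = (1 - η) ^ a / a * exp (-η * x ^ 2 / 2) := by
        rw [intervalIntegral.integral_mul_const, integral_one_sub_rpow_sub_one ha]

theorem le_integral {m : ℝ} (ha0 : 0 < a) (ha1 : a ≤ 1) (hb : 1/2 ≤ b) (hm0 : 0 ≤ m)
    (hm1 : m < 1) :
    m ^ (b + 1/2) / (b + 1/2) * exp (-m * x ^ 2 / 2) ≤ ∫ κ in (0 : ℝ)..1, nbpKernel a b x κ := by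
  have hhead : m ^ (b + 1/2) / (b + 1/2) * exp (-m * x ^ 2 / 2)
      ≤ ∫ κ in (0 : ℝ)..m, nbpKernel a b x κ :=
    calc m ^ (b + 1/2) / (b + 1/2) * exp (-m * x ^ 2 / 2)
        = ∫ κ in (0 : ℝ)..m, κ ^ (b - 1/2) * exp (-m * x ^ 2 / 2) := by
          rw [intervalIntegral.integral_mul_const, integral_rpow_from_zero (by linarith)]
          ring_nf
      _ ≤ ∫ κ in (0 : ℝ)..m, nbpKernel a b x κ :=
          integral_mono_on hm0 ((intervalIntegrable_rpow' (by linarith)).mul_const _)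
            (intervalIntegrable ha0 hb 0 m) fun _ hκ => ge_on_head ha1 hm1 hκ
  have hrest : 0 ≤ ∫ κ in m..1, nbpKernel a b x κ :=
    integral_nonneg hm1.le fun κ hκ => nonneg ⟨hm0.trans hκ.1, hκ.2⟩
  rw [← integral_add_adjacent_intervals (intervalIntegrable ha0 hb 0 m)
    (intervalIntegrable ha0 hb m 1)]
  linarith

end nbpKernel

/-- NBP posterior tail bound: Pr(κ > η | x) ≤ ((b+1/2)(1-η)^a/(a(ηδ)^{b+1/2})) e^{-η(1-δ)x²/2}. -/
theorem stmt_2 (a b η δ x : ℝ) (ha : a ∈ Set.Ioo (0:ℝ) 1) (hb : b ∈ Set.Ioi (1/2 : ℝ))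
    (hη : η ∈ Set.Ioo (0:ℝ) 1) (hδ : δ ∈ Set.Ioo (0:ℝ) 1) :
    (∫ κ in η..1, κ ^ (b - 1/2) * (1 - κ) ^ (a - 1) * Real.exp (-κ * x^2 / 2)) /
      (∫ κ in (0:ℝ)..1, κ ^ (b - 1/2) * (1 - κ) ^ (a - 1) * Real.exp (-κ * x^2 / 2))
    ≤ ((b + 1/2) * (1 - η) ^ a / (a * (η * δ) ^ (b + 1/2))) *
        Real.exp (-η * (1 - δ) * x^2 / 2) := by
  obtain ⟨ha0, ha1⟩ := ha
  obtain ⟨hη0, hη1⟩ := hη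
  obtain ⟨hδ0, hδ1⟩ := hδ
  have hb' : 1/2 ≤ b := le_of_lt hb
  have hm0 : 0 < η * δ := mul_pos hη0 hδ0
  have hm1 : η * δ < 1 := (mul_lt_of_lt_one_right hη0 hδ1).trans hη1
  have hlow : 0 < (η * δ) ^ (b + 1/2) / (b + 1/2) * exp (-(η * δ) * x ^ 2 / 2) :=
    mul_pos (div_pos (rpow_pos_of_pos hm0 _) (by linarith)) (exp_pos _)
  calc _ ≤ (1 - η) ^ a / a * exp (-η * x ^ 2 / 2) /
          ((η * δ) ^ (b + 1/2) / (b + 1/2) * exp (-(η * δ) * x ^ 2 / 2)) :=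
        div_le_div₀ (by positivity) (nbpKernel.integral_tail_le ha0 hb' hη0.le hη1.le) hlow
          (nbpKernel.le_integral ha0 ha1.le hb' hm0.le hm1)
    _ = _ := by
        rw [show -η * (1 - δ) * x ^ 2 / 2 = -η * x ^ 2 / 2 - -(η * δ) * x ^ 2 / 2 by ring,
          exp_sub]
        have := (rpow_pos_of_pos hm0 (b + 1/2)).ne'
        field_simp
end

section
/- Fix a ∈ (0,1), b ∈ (1/2,∞), and η ∈ (0,1). Then Pr(κ ≤ η | x) = (∫₀^η κ^{b-1/2}(1-κ)^{a-1} e^{-κx²/2} dκ)/(∫₀¹ κ^{b-1/2}(1-κ)^{a-1} e^{-κx²/2} dκ) → 1 as x → ∞. -/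
/-!
Write the posterior mass of `κ ≤ η` as `1 - T/D`, where `T` is the integral over `[η, 1]` and `D`
the one over `[0, 1]`. On `[η, 1]` the factor `exp (-κ t)` is at most `exp (-η t)`, while on
`[0, η/2]` it is at least `exp (-(η/2) t)`; hence `T/D = O(exp (-(η/2) t))` as `t = x²/2 → ∞`.
-/

open Real Filter Set Topology MeasureTheory

section LaplaceWeight

variable {g : ℝ → ℝ} {c d t : ℝ}

lemma integral_mul_exp_neg_le (ht : 0 ≤ t) (hcd : c ≤ d)
    (hg : IntervalIntegrable g volume c d) (hg0 : ∀ κ ∈ Icc c d, 0 ≤ g κ) :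
    ∫ κ in c..d, g κ * exp (-κ * t) ≤ exp (-c * t) * ∫ κ in c..d, g κ := by
  rw [← intervalIntegral.integral_const_mul]
  refine intervalIntegral.integral_mono_on hcd (hg.mul_continuousOn (by fun_prop))
    (hg.const_mul _) fun κ hκ => ?_
  rw [mul_comm (exp _)]
  gcongr
  · exact hg0 κ hκ
  · exact hκ.1

lemma exp_neg_mul_integral_le (ht : 0 ≤ t) (hcd : c ≤ d)
    (hg : IntervalIntegrable g volume c d) (hg0 : ∀ κ ∈ Icc c d, 0 ≤ g κ) :
    exp (-d * t) * ∫ κ in c..d, g κ ≤ ∫ κ in c..d, g κ * exp (-κ * t) := by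
  rw [← intervalIntegral.integral_const_mul]
  refine intervalIntegral.integral_mono_on hcd (hg.const_mul _)
    (hg.mul_continuousOn (by fun_prop)) fun κ hκ => ?_
  rw [mul_comm (exp _)]
  gcongr
  · exact hg0 κ hκ
  · exact hκ.2

variable {η : ℝ}

lemma integral_mul_exp_neg_pos (hg : IntervalIntegrable g volume 0 1)
    (hgpos : ∀ κ ∈ Ioo (0 : ℝ) 1, 0 < g κ) (t : ℝ) :
    0 < ∫ κ in (0 : ℝ)..1, g κ * exp (-κ * t) :=
  intervalIntegral.intervalIntegral_pos_of_pos_on (hg.mul_continuousOn (by fun_prop))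
    (fun κ hκ => mul_pos (hgpos κ hκ) (exp_pos _)) one_pos

lemma integral_tail_mul_exp_neg_div_le (hη : η ∈ Ioo (0 : ℝ) 1)
    (hg : IntervalIntegrable g volume 0 1) (hg0 : ∀ κ ∈ Icc (0 : ℝ) 1, 0 ≤ g κ)
    (hgpos : ∀ κ ∈ Ioo (0 : ℝ) 1, 0 < g κ) (ht : 0 ≤ t) :
    (∫ κ in η..1, g κ * exp (-κ * t)) / ∫ κ in (0 : ℝ)..1, g κ * exp (-κ * t) ≤
      exp (-(η / 2) * t) * ((∫ κ in η..1, g κ) / ∫ κ in (0 : ℝ)..η / 2, g κ) := by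
  obtain ⟨hη0, hη1⟩ := hη
  have hsub : ∀ {u v}, u ∈ Icc (0 : ℝ) 1 → v ∈ Icc (0 : ℝ) 1 → IntervalIntegrable g volume u v :=
    fun hu hv => hg.mono_set (uIcc_subset_uIcc (by simpa using hu) (by simpa using hv))
  have hmass : 0 < ∫ κ in (0 : ℝ)..η / 2, g κ :=
    intervalIntegral.intervalIntegral_pos_of_pos_on (hsub (by simp) ⟨by linarith, by linarith⟩)
      (fun κ hκ => hgpos κ ⟨hκ.1, by linarith [hκ.2]⟩) (by linarith)
  have hhead : exp (-(η / 2) * t) * ∫ κ in (0 : ℝ)..η / 2, g κ ≤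
      ∫ κ in (0 : ℝ)..1, g κ * exp (-κ * t) := by
    refine (exp_neg_mul_integral_le ht (by linarith) (hsub (by simp) ⟨by linarith, by linarith⟩)
      fun κ hκ => hg0 κ ⟨hκ.1, by linarith [hκ.2]⟩).trans ?_
    refine intervalIntegral.integral_mono_interval le_rfl (by linarith) (by linarith) ?_
      (hg.mul_continuousOn (by fun_prop))
    exact ae_restrict_of_forall_mem measurableSet_Ioc fun κ hκ =>
      mul_nonneg (hg0 κ (Ioc_subset_Icc_self hκ)) (exp_pos _).le
  have htail := integral_mul_exp_neg_le ht hη1.le (hsub ⟨hη0.le, hη1.le⟩ (by simp))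
    fun κ hκ => hg0 κ ⟨by linarith [hκ.1], hκ.2⟩
  have htail0 : 0 ≤ ∫ κ in η..1, g κ * exp (-κ * t) :=
    intervalIntegral.integral_nonneg hη1.le fun κ hκ =>
      mul_nonneg (hg0 κ ⟨by linarith [hκ.1], hκ.2⟩) (exp_pos _).le
  calc _ ≤ (exp (-η * t) * ∫ κ in η..1, g κ) /
        (exp (-(η / 2) * t) * ∫ κ in (0 : ℝ)..η / 2, g κ) :=
        div_le_div₀ (htail0.trans htail) htail (by positivity) hhead
    _ = _ := by
        rw [mul_div_mul_comm, ← exp_sub]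
        ring_nf

lemma tendsto_integral_tail_mul_exp_neg_div (hη : η ∈ Ioo (0 : ℝ) 1)
    (hg : IntervalIntegrable g volume 0 1) (hg0 : ∀ κ ∈ Icc (0 : ℝ) 1, 0 ≤ g κ)
    (hgpos : ∀ κ ∈ Ioo (0 : ℝ) 1, 0 < g κ) :
    Tendsto (fun t => (∫ κ in η..1, g κ * exp (-κ * t)) /
      ∫ κ in (0 : ℝ)..1, g κ * exp (-κ * t)) atTop (𝓝 0) := by
  have hdecay : Tendsto (fun t => exp (-(η / 2) * t) *
      ((∫ κ in η..1, g κ) / ∫ κ in (0 : ℝ)..η / 2, g κ)) atTop (𝓝 0) := by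
    simpa using (tendsto_exp_atBot.comp
      (tendsto_id.const_mul_atTop_of_neg (r := -(η / 2)) (by linarith [hη.1]))).mul_const _
  refine tendsto_of_tendsto_of_tendsto_of_le_of_le' tendsto_const_nhds hdecay ?_ ?_
  · refine Eventually.of_forall fun t => div_nonneg ?_ (integral_mul_exp_neg_pos hg hgpos t).le
    exact intervalIntegral.integral_nonneg hη.2.le fun κ hκ =>
      mul_nonneg (hg0 κ ⟨by linarith [hη.1, hκ.1], hκ.2⟩) (exp_pos _).le
  · filter_upwards [eventually_ge_atTop 0] with t ht
    exact integral_tail_mul_exp_neg_div_le hη hg hg0 hgpos ht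

theorem tendsto_integral_mul_exp_neg_div_integral_mul_exp_neg (hη : η ∈ Ioo (0 : ℝ) 1)
    (hg : IntervalIntegrable g volume 0 1) (hg0 : ∀ κ ∈ Icc (0 : ℝ) 1, 0 ≤ g κ)
    (hgpos : ∀ κ ∈ Ioo (0 : ℝ) 1, 0 < g κ) :
    Tendsto (fun t => (∫ κ in (0 : ℝ)..η, g κ * exp (-κ * t)) /
      ∫ κ in (0 : ℝ)..1, g κ * exp (-κ * t)) atTop (𝓝 1) := by
  refine ((tendsto_integral_tail_mul_exp_neg_div hη hg hg0 hgpos).const_sub 1).congr'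
    (Eventually.of_forall fun t => ?_) |>.trans (by simp)
  have hfg : IntervalIntegrable (fun κ => g κ * exp (-κ * t)) volume 0 1 :=
    hg.mul_continuousOn (by fun_prop)
  have hfgη : IntervalIntegrable (fun κ => g κ * exp (-κ * t)) volume 0 η :=
    hfg.mono_set (uIcc_subset_uIcc (by simp) (by simpa using ⟨hη.1.le, hη.2.le⟩))
  rw [one_sub_div (integral_mul_exp_neg_pos hg hgpos t).ne',
    ← intervalIntegral.integral_add_adjacent_intervals hfgη (hfgη.symm.trans hfg),
    add_sub_cancel_right]

end LaplaceWeight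

lemma intervalIntegrable_rpow_mul_one_sub_rpow {p q : ℝ} (hp : 0 ≤ p) (hq : -1 < q) :
    IntervalIntegrable (fun κ : ℝ => κ ^ p * (1 - κ) ^ q) volume 0 1 := by
  have h : IntervalIntegrable (fun κ : ℝ => (1 - κ) ^ q) volume 0 1 := by
    simpa using (intervalIntegral.intervalIntegrable_rpow' (a := 1) (b := 0) hq).comp_sub_left 1
  simpa only [mul_comm] using h.mul_continuousOn (continuous_rpow_const hp).continuousOn

/-- For fixed a ∈ (0,1), b > 1/2, η ∈ (0,1), Pr(κ ≤ η | x) → 1 as x → ∞. -/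
theorem stmt_4 (a b η : ℝ) (ha : a ∈ Set.Ioo (0:ℝ) 1) (hb : b ∈ Set.Ioi (1/2 : ℝ))
    (hη : η ∈ Set.Ioo (0:ℝ) 1) :
    Tendsto (fun x : ℝ =>
      (∫ κ in (0:ℝ)..η, κ ^ (b - 1/2) * (1 - κ) ^ (a - 1) * Real.exp (-κ * x^2 / 2)) /
        (∫ κ in (0:ℝ)..1, κ ^ (b - 1/2) * (1 - κ) ^ (a - 1) * Real.exp (-κ * x^2 / 2)))
      atTop (nhds 1) := by
  have hp : 0 ≤ b - 1 / 2 := by linarith [mem_Ioi.mp hb]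
  have hq : -1 < a - 1 := by linarith [ha.1]
  have hweight := tendsto_integral_mul_exp_neg_div_integral_mul_exp_neg hη
    (intervalIntegrable_rpow_mul_one_sub_rpow hp hq)
    (fun κ hκ => mul_nonneg (rpow_nonneg hκ.1 _) (rpow_nonneg (sub_nonneg.mpr hκ.2) _))
    (fun κ hκ => mul_pos (rpow_pos_of_pos hκ.1 _) (rpow_pos_of_pos (sub_pos.mpr hκ.2) _))
  simpa only [mul_div_assoc, Function.comp_def] using
    hweight.comp ((tendsto_pow_atTop two_ne_zero).atTop_div_const two_pos)
end

section
/- Let ξ ∈ (0, 1/2), δ ∈ (0,1), b ∈ (1/2,∞), and let (aₙ) ⊂ (0,1) with aₙ → 0. For X ~ N(0,1) under the null, the Type I error t₁ = Pr(E(1-κ|X; aₙ, b) > 1/2) satisfies, for all sufficiently large n, t₁ ≥ 2(1 - Φ(√((2/(ξ(1-δ))) log((b+1/2)(1-ξ)^{aₙ} / (aₙ (ξδ)^{b+1/2} (1/2 - ξ)))))), where Φ is the standard normal CDF. -/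
open Real Filter MeasureTheory ProbabilityTheory

/-!
Write `w(κ) = κ^(b-1/2) (1-κ)^(a-1) e^(-κx²/2)`, so that `E(1-κ | x) = ∫ (1-κ) w / ∫ w`
over `[0,1]`.
Split `[0,1]` at `ξ`. On `[0,ξ]` the mass of `w` is at least `(ξδ)^(b+1/2)/(b+1/2) · e^(-ξδx²/2)`
(keep only `[0,ξδ]`, where `(1-κ)^(a-1) ≥ 1`); on `[ξ,1]` it is at most `(1-ξ)^a/a · e^(-ξx²/2)`
(bound `κ^(b-1/2)` by `1` and integrate `(1-κ)^(a-1)`). Since `1-κ ≥ 1-ξ` on `[0,ξ]`, this gives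
`E(κ | x) ≤ ξ + (b+1/2)(1-ξ)^a / (a (ξδ)^(b+1/2)) · e^(-ξ(1-δ)x²/2)`, which is below `1/2` as soon
as `|x|` exceeds the square root in the statement. So the rejection region contains `{|x| > c}`,
of standard normal probability `2(1 - Φ(c))` by symmetry.
-/

-- `E(1 - κ | X = x)` under the NBP prior: the shrinkage factor `κ = 1/(1+λ²)` has posterior density
-- proportional to `κ^(b-1/2) (1-κ)^(a-1) e^(-κx²/2)` on `(0,1)`.
noncomputable def posteriorMeanOneSubKappa (a b x : ℝ) : ℝ :=
  (∫ κ in (0:ℝ)..1, κ ^ (b - 1/2) * (1 - κ) ^ a * exp (-κ * x^2 / 2)) /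
    (∫ κ in (0:ℝ)..1, κ ^ (b - 1/2) * (1 - κ) ^ (a - 1) * exp (-κ * x^2 / 2))

section PosteriorIntegrals

variable {p q : ℝ} (x : ℝ)

lemma exp_neg_mul_sq_div_two_le_one {κ : ℝ} (hκ : 0 ≤ κ) : exp (-κ * x^2 / 2) ≤ 1 := by
  rw [exp_le_one_iff]
  have : 0 ≤ κ * x^2 := by positivity
  linarith

lemma intervalIntegrable_rpow_mul_one_sub_rpow_mul_exp (hp : 0 ≤ p) (hq : -1 < q) :
    IntervalIntegrable (fun κ ↦ κ ^ p * (1 - κ) ^ q * exp (-κ * x^2 / 2)) volume 0 1 := by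
  have hmaj : IntervalIntegrable (fun κ : ℝ ↦ (1 - κ) ^ q) volume 0 1 := by
    simpa using
      ((intervalIntegral.intervalIntegrable_rpow' (a := 0) (b := 1) hq).comp_sub_left 1).symm
  rw [intervalIntegrable_iff_integrableOn_Ioc_of_le zero_le_one] at hmaj ⊢
  refine hmaj.mono' (by fun_prop) ?_
  filter_upwards [ae_restrict_mem measurableSet_Ioc] with κ ⟨hκ0, hκ1⟩
  have h1 : 0 ≤ (1 - κ) ^ q := rpow_nonneg (by linarith) q
  rw [norm_of_nonneg (by positivity)]
  calc κ ^ p * (1 - κ) ^ q * exp (-κ * x^2 / 2) ≤ 1 * (1 - κ) ^ q * 1 := by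
        gcongr
        · exact rpow_le_one hκ0.le hκ1 hp
        · exact exp_neg_mul_sq_div_two_le_one x hκ0.le
    _ = (1 - κ) ^ q := by ring

lemma rpow_div_mul_exp_le_integral_head (hp : 0 ≤ p) (hq₁ : -1 < q) (hq₀ : q ≤ 0) {η ξ : ℝ}
    (hη₀ : 0 ≤ η) (hηξ : η ≤ ξ) (hη₁ : η < 1) (hξ₁ : ξ ≤ 1) :
    η ^ (p + 1) / (p + 1) * exp (-η * x^2 / 2) ≤
      ∫ κ in (0:ℝ)..ξ, κ ^ p * (1 - κ) ^ q * exp (-κ * x^2 / 2) := by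
  have hint := intervalIntegrable_rpow_mul_one_sub_rpow_mul_exp x hp hq₁
  have hpow : ∫ κ in (0:ℝ)..η, κ ^ p * exp (-η * x^2 / 2) =
      η ^ (p + 1) / (p + 1) * exp (-η * x^2 / 2) := by
    rw [intervalIntegral.integral_mul_const, integral_rpow (Or.inl (by linarith)),
      zero_rpow (by linarith), sub_zero]
  calc η ^ (p + 1) / (p + 1) * exp (-η * x^2 / 2)
      = ∫ κ in (0:ℝ)..η, κ ^ p * exp (-η * x^2 / 2) := hpow.symm
    _ ≤ ∫ κ in (0:ℝ)..η, κ ^ p * (1 - κ) ^ q * exp (-κ * x^2 / 2) := by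
        refine intervalIntegral.integral_mono_on hη₀
          ((intervalIntegral.intervalIntegrable_rpow' (by linarith)).mul_const _)
          (hint.mono_set (Set.uIcc_subset_uIcc (by simp)
            (Set.mem_uIcc_of_le hη₀ (by linarith)))) ?_
        rintro κ ⟨hκ₀, hκη⟩
        have h1 : 1 ≤ (1 - κ) ^ q :=
          one_le_rpow_of_pos_of_le_one_of_nonpos (by linarith) (by linarith) hq₀
        calc κ ^ p * exp (-η * x^2 / 2) = κ ^ p * 1 * exp (-η * x^2 / 2) := by ring
          _ ≤ κ ^ p * (1 - κ) ^ q * exp (-κ * x^2 / 2) := by gcongr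
    _ ≤ ∫ κ in (0:ℝ)..ξ, κ ^ p * (1 - κ) ^ q * exp (-κ * x^2 / 2) := by
        refine intervalIntegral.integral_mono_interval le_rfl hη₀ hηξ ?_
          (hint.mono_set (Set.uIcc_subset_uIcc (by simp)
            (Set.mem_uIcc_of_le (by linarith) hξ₁)))
        filter_upwards [ae_restrict_mem measurableSet_Ioc] with κ ⟨hκ₀, hκ₁⟩
        have : 0 ≤ 1 - κ := by linarith
        positivity

lemma integral_tail_le_rpow_div_mul_exp (hp : 0 ≤ p) {α ξ : ℝ} (hα : 0 < α) (hξ₀ : 0 ≤ ξ)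
    (hξ₁ : ξ ≤ 1) :
    ∫ κ in ξ..1, κ ^ p * (1 - κ) ^ (α - 1) * exp (-κ * x^2 / 2) ≤
      (1 - ξ) ^ α / α * exp (-ξ * x^2 / 2) := by
  have hmaj : IntervalIntegrable (fun κ : ℝ ↦ (1 - κ) ^ (α - 1)) volume ξ 1 := by
    simpa using ((intervalIntegral.intervalIntegrable_rpow' (a := 0) (b := 1 - ξ)
      (r := α - 1) (by linarith)).comp_sub_left 1).symm
  have hbeta : ∫ κ in ξ..1, (1 - κ) ^ (α - 1) = (1 - ξ) ^ α / α := by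
    rw [intervalIntegral.integral_comp_sub_left (fun u ↦ u ^ (α - 1)), sub_self,
      integral_rpow (Or.inl (by linarith)), sub_add_cancel, zero_rpow hα.ne', sub_zero]
  rw [← hbeta, ← intervalIntegral.integral_mul_const]
  refine intervalIntegral.integral_mono_on hξ₁
    ((intervalIntegrable_rpow_mul_one_sub_rpow_mul_exp x hp (by linarith)).mono_set
      (Set.uIcc_subset_uIcc (Set.mem_uIcc_of_le hξ₀ hξ₁) (by simp)))
    (hmaj.mul_const _) ?_
  rintro κ ⟨hξκ, hκ₁⟩
  have : 0 ≤ 1 - κ := by linarith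
  calc κ ^ p * (1 - κ) ^ (α - 1) * exp (-κ * x^2 / 2)
      ≤ 1 * (1 - κ) ^ (α - 1) * exp (-ξ * x^2 / 2) := by
        gcongr
        exact rpow_le_one (by linarith) hκ₁ hp
    _ = (1 - κ) ^ (α - 1) * exp (-ξ * x^2 / 2) := by ring

lemma mul_integral_head_le_integral (hp : 0 ≤ p) {α ξ : ℝ} (hα : 0 < α) (hξ₀ : 0 ≤ ξ)
    (hξ₁ : ξ < 1) :
    (1 - ξ) * ∫ κ in (0:ℝ)..ξ, κ ^ p * (1 - κ) ^ (α - 1) * exp (-κ * x^2 / 2) ≤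
      ∫ κ in (0:ℝ)..1, κ ^ p * (1 - κ) ^ α * exp (-κ * x^2 / 2) := by
  have hint := intervalIntegrable_rpow_mul_one_sub_rpow_mul_exp x hp (q := α) (by linarith)
  have hξ : ξ ∈ Set.uIcc (0:ℝ) 1 := Set.mem_uIcc_of_le hξ₀ hξ₁.le
  rw [← intervalIntegral.integral_add_adjacent_intervals
    (hint.mono_set (Set.uIcc_subset_uIcc (by simp) hξ))
    (hint.mono_set (Set.uIcc_subset_uIcc hξ (by simp))), ← intervalIntegral.integral_const_mul]
  have htail : 0 ≤ ∫ κ in ξ..1, κ ^ p * (1 - κ) ^ α * exp (-κ * x^2 / 2) := by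
    refine intervalIntegral.integral_nonneg hξ₁.le fun κ ⟨hξκ, hκ₁⟩ ↦ ?_
    have : 0 ≤ 1 - κ := by linarith
    have : 0 ≤ κ := by linarith
    positivity
  have hhead : ∫ κ in (0:ℝ)..ξ, (1 - ξ) * (κ ^ p * (1 - κ) ^ (α - 1) * exp (-κ * x^2 / 2)) ≤
      ∫ κ in (0:ℝ)..ξ, κ ^ p * (1 - κ) ^ α * exp (-κ * x^2 / 2) := by
    refine intervalIntegral.integral_mono_on hξ₀
      (((intervalIntegrable_rpow_mul_one_sub_rpow_mul_exp x hp (by linarith)).mono_set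
        (Set.uIcc_subset_uIcc (by simp) hξ)).const_mul _)
      (hint.mono_set (Set.uIcc_subset_uIcc (by simp) hξ)) fun κ ⟨hκ₀, hκξ⟩ ↦ ?_
    have hκ : 0 < 1 - κ := by linarith
    rw [show (1 - κ) ^ α = (1 - κ) * (1 - κ) ^ (α - 1) by
      rw [← rpow_one_add' hκ.le (by linarith), add_sub_cancel]]
    have : 0 ≤ (1 - κ) ^ (α - 1) := rpow_nonneg hκ.le _
    calc (1 - ξ) * (κ ^ p * (1 - κ) ^ (α - 1) * exp (-κ * x^2 / 2))
        ≤ (1 - κ) * (κ ^ p * (1 - κ) ^ (α - 1) * exp (-κ * x^2 / 2)) := by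
          gcongr
      _ = κ ^ p * ((1 - κ) * (1 - κ) ^ (α - 1)) * exp (-κ * x^2 / 2) := by ring
  linarith

end PosteriorIntegrals

lemma sub_div_le_div_add_of_mul_le {A B G c : ℝ} (hA : 0 < A) (hB : 0 ≤ B) (hc : c ≤ 1)
    (hG : c * A ≤ G) : c - B / A ≤ G / (A + B) := by
  rw [sub_div' hA.ne', div_le_div_iff₀ hA (by linarith)]
  nlinarith [mul_nonneg hA.le hB, mul_nonneg (sub_nonneg.2 hc) (mul_nonneg hA.le hB)]

theorem one_sub_sub_tail_le_posteriorMeanOneSubKappa {a b ξ δ : ℝ} (ha₀ : 0 < a) (ha₁ : a ≤ 1)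
    (hb : 1/2 ≤ b) (hξ₀ : 0 < ξ) (hξ₁ : ξ < 1) (hδ₀ : 0 < δ) (hδ₁ : δ ≤ 1) (x : ℝ) :
    1 - ξ - (b + 1/2) * (1 - ξ) ^ a / (a * (ξ * δ) ^ (b + 1/2)) *
        exp (-(ξ * (1 - δ)) * x^2 / 2) ≤ posteriorMeanOneSubKappa a b x := by
  have hp : 0 ≤ b - 1/2 := by linarith
  have hb₁ : b + 1/2 = b - 1/2 + 1 := by ring
  have hξδ : 0 < ξ * δ := mul_pos hξ₀ hδ₀
  have hξδξ : ξ * δ ≤ ξ := mul_le_of_le_one_right hξ₀.le hδ₁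
  set w := fun κ : ℝ ↦ κ ^ (b - 1/2) * (1 - κ) ^ (a - 1) * exp (-κ * x^2 / 2)
  have hint : IntervalIntegrable w volume 0 1 :=
    intervalIntegrable_rpow_mul_one_sub_rpow_mul_exp x hp (by linarith)
  have hξ : ξ ∈ Set.uIcc (0:ℝ) 1 := Set.mem_uIcc_of_le hξ₀.le hξ₁.le
  have hsplit : ∫ κ in (0:ℝ)..1, w κ = (∫ κ in (0:ℝ)..ξ, w κ) + ∫ κ in ξ..1, w κ :=
    (intervalIntegral.integral_add_adjacent_intervals
      (hint.mono_set (Set.uIcc_subset_uIcc (by simp) hξ))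
      (hint.mono_set (Set.uIcc_subset_uIcc hξ (by simp)))).symm
  have hhead := rpow_div_mul_exp_le_integral_head x hp (q := a - 1) (by linarith) (by linarith)
    hξδ.le hξδξ (by linarith) hξ₁.le
  rw [← hb₁] at hhead
  have hhead_pos : 0 < ∫ κ in (0:ℝ)..ξ, w κ := lt_of_lt_of_le (by positivity) hhead
  have htail := integral_tail_le_rpow_div_mul_exp x hp ha₀ hξ₀.le hξ₁.le
  have htail_nonneg : 0 ≤ ∫ κ in ξ..1, w κ :=
    intervalIntegral.integral_nonneg hξ₁.le fun κ ⟨hξκ, hκ₁⟩ ↦ by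
      have : 0 ≤ 1 - κ := by linarith
      have : 0 ≤ κ := by linarith
      positivity
  have hratio : (∫ κ in ξ..1, w κ) / ∫ κ in (0:ℝ)..ξ, w κ ≤
      (b + 1/2) * (1 - ξ) ^ a / (a * (ξ * δ) ^ (b + 1/2)) * exp (-(ξ * (1 - δ)) * x^2 / 2) := by
    have hexp : exp (-ξ * x^2 / 2) =
        exp (-(ξ * (1 - δ)) * x^2 / 2) * exp (-(ξ * δ) * x^2 / 2) := by
      rw [← exp_add]; ring_nf
    calc (∫ κ in ξ..1, w κ) / ∫ κ in (0:ℝ)..ξ, w κ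
        ≤ (1 - ξ) ^ a / a * exp (-ξ * x^2 / 2) /
            ((ξ * δ) ^ (b + 1/2) / (b + 1/2) * exp (-(ξ * δ) * x^2 / 2)) :=
          div_le_div₀ (by positivity) htail (by positivity) hhead
      _ = _ := by
          rw [hexp]
          field_simp
  have hmean := sub_div_le_div_add_of_mul_le hhead_pos htail_nonneg (by linarith : 1 - ξ ≤ 1)
    (mul_integral_head_le_integral x hp ha₀ hξ₀.le hξ₁)
  rw [← hsplit] at hmean
  unfold posteriorMeanOneSubKappa
  linarith

lemma mul_exp_lt_of_sqrt_log_lt_abs {C s r x : ℝ} (hC : 0 < C) (hs : 0 < s) (hr : 0 < r)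
    (hx : √((2 / r) * log (C / s)) < |x|) : C * exp (-r * x^2 / 2) < s := by
  have hx₀ : 0 < |x| := lt_of_le_of_lt (sqrt_nonneg _) hx
  rw [sqrt_lt' hx₀, sq_abs, div_mul_eq_mul_div, div_lt_iff₀ hr] at hx
  have hlog : log (C / s) < r * x^2 / 2 := by linarith
  rw [log_lt_iff_lt_exp (by positivity), div_lt_iff₀ hs] at hlog
  calc C * exp (-r * x^2 / 2) < exp (r * x^2 / 2) * s * exp (-r * x^2 / 2) := by gcongr
    _ = s := by rw [mul_right_comm, ← exp_add, neg_mul, neg_div, add_neg_cancel, exp_zero, one_mul]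

lemma gaussianPDFReal_zero_one (t : ℝ) :
    gaussianPDFReal 0 1 t = (√(2 * π))⁻¹ * exp (-t^2 / 2) := by
  simp [gaussianPDFReal]

lemma gaussianReal_lt_abs {c : ℝ} (hc : 0 ≤ c) :
    gaussianReal 0 1 {x | c < |x|} =
      ENNReal.ofReal (2 * (1 - ∫ t in Set.Iic c, gaussianPDFReal 0 1 t)) := by
  have hint : Integrable (gaussianPDFReal 0 1) := integrable_gaussianPDFReal 0 1
  have hcompl : (∫ t in Set.Iic c, gaussianPDFReal 0 1 t) +
      ∫ t in Set.Ioi c, gaussianPDFReal 0 1 t = 1 := by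
    rw [← Set.compl_Iic, integral_add_compl measurableSet_Iic hint,
      integral_gaussianPDFReal_eq_one 0 one_ne_zero]
  have hsymm : ∫ t in Set.Iio (-c), gaussianPDFReal 0 1 t =
      ∫ t in Set.Ioi c, gaussianPDFReal 0 1 t := by
    rw [setIntegral_congr_set Iio_ae_eq_Iic, ← integral_comp_neg_Ioi]
    simp [gaussianPDFReal]
  have hset : {x : ℝ | c < |x|} = Set.Iio (-c) ∪ Set.Ioi c := by
    ext x
    simp only [Set.mem_ofPred_eq, Set.mem_union, Set.mem_Iio, Set.mem_Ioi]
    rw [lt_abs, or_comm, lt_neg]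
  have hdisj : Disjoint (Set.Iio (-c)) (Set.Ioi c) :=
    Set.disjoint_left.2 fun x (h₁ : x < -c) (h₂ : c < x) ↦ by linarith
  rw [hset, gaussianReal_apply_eq_integral 0 one_ne_zero,
    setIntegral_union hdisj measurableSet_Ioi hint.integrableOn hint.integrableOn, hsymm]
  congr 1
  linarith

theorem stmt_14_general (ξ δ b : ℝ) (hξ : ξ ∈ Set.Ioo (0:ℝ) (1/2)) (hδ : δ ∈ Set.Ioo (0:ℝ) 1)
    (hb : b ∈ Set.Ioi (1/2 : ℝ)) (a : ℕ → ℝ) (ha : ∀ n, a n ∈ Set.Ioo (0:ℝ) 1) :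
    ∀ᶠ n in atTop,
      ENNReal.ofReal (2 * (1 -
        (∫ t in Set.Iic (Real.sqrt ((2 / (ξ * (1 - δ))) *
            Real.log ((b + 1/2) * (1 - ξ) ^ (a n) /
              (a n * (ξ * δ) ^ (b + 1/2) * (1/2 - ξ))))),
          (Real.sqrt (2 * π))⁻¹ * Real.exp (-t^2 / 2))))
      ≤ (gaussianReal 0 1) {x : ℝ |
          (1/2 : ℝ) <
            (∫ κ in (0:ℝ)..1, κ ^ (b - 1/2) * (1 - κ) ^ (a n) * Real.exp (-κ * x^2 / 2)) /
              (∫ κ in (0:ℝ)..1,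
                κ ^ (b - 1/2) * (1 - κ) ^ (a n - 1) * Real.exp (-κ * x^2 / 2))} := by
  obtain ⟨hξ₀, hξ₁⟩ := hξ
  obtain ⟨hδ₀, hδ₁⟩ := hδ
  have hb' : 1/2 < b := hb
  refine Eventually.of_forall fun n ↦ ?_
  obtain ⟨ha₀, ha₁⟩ := ha n
  have hξδ : 0 < ξ * δ := mul_pos hξ₀ hδ₀
  set C := (b + 1/2) * (1 - ξ) ^ a n / (a n * (ξ * δ) ^ (b + 1/2))
  have hC : 0 < C := div_pos (mul_pos (by linarith) (rpow_pos_of_pos (by linarith) _))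
    (mul_pos ha₀ (rpow_pos_of_pos hξδ _))
  have hthreshold : (b + 1/2) * (1 - ξ) ^ a n / (a n * (ξ * δ) ^ (b + 1/2) * (1/2 - ξ)) =
      C / (1/2 - ξ) := (div_div _ _ _).symm
  have hrejects : {x : ℝ | √((2 / (ξ * (1 - δ))) * log (C / (1/2 - ξ))) < |x|} ⊆
      {x | 1/2 < posteriorMeanOneSubKappa (a n) b x} := by
    intro x hx
    have htail := mul_exp_lt_of_sqrt_log_lt_abs hC (by linarith : 0 < 1/2 - ξ)
      (mul_pos hξ₀ (by linarith : 0 < 1 - δ)) hx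
    have hmean := one_sub_sub_tail_le_posteriorMeanOneSubKappa ha₀ ha₁.le hb'.le
      hξ₀ (by linarith) hδ₀ hδ₁.le x
    exact lt_of_lt_of_le (by linarith) hmean
  simp_rw [hthreshold, ← gaussianPDFReal_zero_one]
  rw [← gaussianReal_lt_abs (sqrt_nonneg _)]
  exact measure_mono hrejects

/-- Asymptotic lower bound on the Type I error of the NBP thresholding rule. -/
theorem stmt_14 (ξ δ b : ℝ) (hξ : ξ ∈ Set.Ioo (0:ℝ) (1/2)) (hδ : δ ∈ Set.Ioo (0:ℝ) 1)
    (hb : b ∈ Set.Ioi (1/2 : ℝ)) (a : ℕ → ℝ) (ha : ∀ n, a n ∈ Set.Ioo (0:ℝ) 1)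
    (ha0 : Tendsto a atTop (nhds 0)) :
    ∀ᶠ n in atTop,
      ENNReal.ofReal (2 * (1 -
        (∫ t in Set.Iic (Real.sqrt ((2 / (ξ * (1 - δ))) *
            Real.log ((b + 1/2) * (1 - ξ) ^ (a n) /
              (a n * (ξ * δ) ^ (b + 1/2) * (1/2 - ξ))))),
          (Real.sqrt (2 * π))⁻¹ * Real.exp (-t^2 / 2))))
      ≤ (gaussianReal 0 1) {x : ℝ |
          (1/2 : ℝ) <
            (∫ κ in (0:ℝ)..1, κ ^ (b - 1/2) * (1 - κ) ^ (a n) * Real.exp (-κ * x^2 / 2)) /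
              (∫ κ in (0:ℝ)..1,
                κ ^ (b - 1/2) * (1 - κ) ^ (a n - 1) * Real.exp (-κ * x^2 / 2))} :=
  stmt_14_general ξ δ b hξ hδ hb a ha
end
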